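/- arXiv:2209.05659 — 4 statements merged into one kernel-verified Lean document; each statement's English description precedes it below -/
import Mathlib

section
/- Immunity Lemma: If A is not Turing reducible to B, then there is a set S ≤_T A such that S is immune to B-computable sets, i.e., S is infinite and no infinite B-computable set is a subset of S. -/
open Classical in
noncomputable def chi (A : Set ℕ) : ℕ →. ℕ := fun n => Part.some (if n ∈ A then 1 else 0)

/-- Functions partial recursive in an oracle `O`. -/
inductive RecursiveInOracle (O : ℕ →. ℕ) : (ℕ →. ℕ) → Prop
  | zero : RecursiveInOracle O (pure 0)
  | succ : RecursiveInOracle O (fun n => Part.some (n + 1))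
  | left : RecursiveInOracle O (fun n => Part.some n.unpair.1)
  | right : RecursiveInOracle O (fun n => Part.some n.unpair.2)
  | oracle : RecursiveInOracle O O
  | pair {f g} : RecursiveInOracle O f → RecursiveInOracle O g →
      RecursiveInOracle O fun n => Nat.pair <$> f n <*> g n
  | comp {f g} : RecursiveInOracle O f → RecursiveInOracle O g →
      RecursiveInOracle O fun n => g n >>= f
  | prec {f g} : RecursiveInOracle O f → RecursiveInOracle O g →
      RecursiveInOracle O (Nat.unpaired fun a n =>
        n.rec (f a) fun y IH => do let i ← IH; g (Nat.pair a (Nat.pair y i)))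
  | rfind {f} : RecursiveInOracle O f →
      RecursiveInOracle O fun a => Nat.rfind fun n => (fun m => m = 0) <$> f (Nat.pair a n)

/-- `A` is Turing reducible to `B`. -/
def TuringRed (A B : Set ℕ) : Prop := RecursiveInOracle (chi B) (chi A)

/-- A total function computable from the oracle `O`. -/
def ComputableInOracle (O : ℕ →. ℕ) (f : ℕ → ℕ) : Prop := RecursiveInOracle O fun n => Part.some (f n)

/-- `S` is computably enumerable in the oracle `O`. -/
def CeIn (O : ℕ →. ℕ) (S : Set ℕ) : Prop :=
  ∃ f : ℕ →. ℕ, RecursiveInOracle O f ∧ ∀ n, n ∈ S ↔ (f n).Dom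

/-- The `e`-th c.e. set. -/
def W (e : ℕ) : Set ℕ := {n | ((Denumerable.ofNat Nat.Partrec.Code e).eval n).Dom}

/-- The halting problem `∅'`. -/
def K0 : Set ℕ := {n | ((Denumerable.ofNat Nat.Partrec.Code n.unpair.1).eval n.unpair.2).Dom}

/-!
Take for `S` the set of codes of the finite prefixes `A ↾ n`; it is computable from `A` and
infinite. An infinite subset `C` of `S` contains prefixes of arbitrary length, since it holds at
most one prefix of each length. So if `C` is also `B`-computable, then `B` decides `A`: given `a`,
search `C` for a prefix of length greater than `a` and read off its `a`-th bit.
-/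

theorem RecursiveInOracle.of_partrec {O f : ℕ →. ℕ} (hf : Nat.Partrec f) :
    RecursiveInOracle O f := by
  induction hf with
  | zero => exact .zero
  | succ => exact .succ
  | left => exact .left
  | right => exact .right
  | pair _ _ hf hg => exact .pair hf hg
  | comp _ _ hf hg => exact .comp hf hg
  | prec _ _ hf hg => exact .prec hf hg
  | rfind _ hf => exact .rfind hf

theorem RecursiveInOracle.of_eq {O f g : ℕ →. ℕ} (hf : RecursiveInOracle O f)
    (H : ∀ n, f n = g n) : RecursiveInOracle O g :=
  funext H ▸ hf

theorem Primrec.nat_pow : Primrec₂ ((· ^ ·) : ℕ → ℕ → ℕ) :=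
  Primrec₂.unpaired'.1 Nat.Primrec.pow

namespace ComputableInOracle

variable {O : ℕ →. ℕ}

theorem of_eq {f g : ℕ → ℕ} (hf : ComputableInOracle O f) (H : ∀ n, f n = g n) :
    ComputableInOracle O g :=
  funext H ▸ hf

theorem of_primrec {f : ℕ → ℕ} (hf : Primrec f) : ComputableInOracle O f :=
  .of_partrec (Nat.Partrec.of_primrec (Primrec.nat_iff.1 hf))

theorem comp {f g : ℕ → ℕ} (hf : ComputableInOracle O f) (hg : ComputableInOracle O g) :
    ComputableInOracle O (fun n => f (g n)) := by
  simpa [ComputableInOracle] using RecursiveInOracle.comp hf hg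

theorem comp₂ {f : ℕ → ℕ} {g : ℕ → ℕ → ℕ} (hf : ComputableInOracle O f) (hg : Primrec₂ g) :
    ComputableInOracle O (fun n => g n (f n)) := by
  have hpair : ComputableInOracle O (fun n => Nat.pair n (f n)) := by
    simpa [ComputableInOracle, Seq.seq] using
      RecursiveInOracle.pair (of_primrec (O := O) Primrec.id) hf
  have hg' : ComputableInOracle O (fun m => g m.unpair.1 m.unpair.2) :=
    of_primrec (hg.comp (Primrec.fst.comp Primrec.unpair) (Primrec.snd.comp Primrec.unpair))
  simpa using hg'.comp hpair

theorem nat_rec {f : ℕ → ℕ} {step : ℕ → ℕ → ℕ}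
    (hstep : ComputableInOracle O (fun p => step p.unpair.1 p.unpair.2))
    (hf : ∀ n, f (n + 1) = step n (f n)) : ComputableInOracle O f := by
  have hstep' : ComputableInOracle O (fun m => step m.unpair.2.unpair.1 m.unpair.2.unpair.2) :=
    hstep.comp (of_primrec (Primrec.snd.comp Primrec.unpair))
  have hrec := (RecursiveInOracle.prec (of_primrec (O := O) (Primrec.const (f 0))) hstep').comp
    (of_primrec (O := O) (Primrec₂.natPair.comp (Primrec.const 0) Primrec.id))
  refine hrec.of_eq fun n => ?_
  induction n with
  | zero => simp [Nat.unpaired]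
  | succ n ih =>
    simp only [id, Part.bind_eq_bind, Part.bind_some, Nat.unpaired, Nat.unpair_pair] at ih ⊢
    simp [ih, hf]

theorem find {p : ℕ → ℕ → Prop} [∀ a, DecidablePred (p a)]
    (hp : ComputableInOracle O (fun k => if p k.unpair.1 k.unpair.2 then 0 else 1))
    (H : ∀ a, ∃ n, p a n) : ComputableInOracle O (fun a => Nat.find (H a)) := by
  refine (RecursiveInOracle.rfind hp).of_eq fun a =>
    Part.eq_some_iff.2 (Nat.mem_rfind.2 ⟨?_, fun hm => ?_⟩)
  · simpa using Nat.find_spec (H a)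
  · simpa using Nat.find_min (H a) hm

end ComputableInOracle

section Prefix

open Classical

theorem computableInOracle_indicator_iff {O : ℕ →. ℕ} {S : Set ℕ} :
    ComputableInOracle O (fun n => if n ∈ S then 1 else 0) ↔ RecursiveInOracle O (chi S) :=
  Iff.rfl

variable (A : Set ℕ)

noncomputable def prefixCode : ℕ → ℕ
  | 0 => 0
  | n + 1 => prefixCode n + (if n ∈ A then 1 else 0) * 2 ^ n

theorem prefixCode_lt_two_pow (n : ℕ) : prefixCode A n < 2 ^ n := by
  induction n with
  | zero => simp [prefixCode]
  | succ n ih =>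
    rw [prefixCode, pow_succ]
    split_ifs <;> omega

theorem prefixCode_div_two_pow_mod_two {n k : ℕ} (h : n < k) :
    prefixCode A k / 2 ^ n % 2 = if n ∈ A then 1 else 0 := by
  induction k with
  | zero => omega
  | succ k ih =>
    rw [prefixCode]
    rcases Nat.lt_succ_iff_lt_or_eq.1 h with hnk | rfl
    · obtain ⟨d, rfl⟩ := Nat.exists_eq_add_of_lt hnk
      generalize (if n + d + 1 ∈ A then 1 else 0) = b
      rw [show b * 2 ^ (n + d + 1) = b * 2 ^ d * 2 * 2 ^ n by ring,
        Nat.add_mul_div_right _ _ (Nat.two_pow_pos n), Nat.add_mul_mod_self_right]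
      exact ih hnk
    · rw [Nat.add_mul_div_right _ _ (Nat.two_pow_pos n),
        Nat.div_eq_of_lt (prefixCode_lt_two_pow A n)]
      split_ifs <;> simp

theorem computableInOracle_prefixCode : ComputableInOracle (chi A) (prefixCode A) := by
  have hmem : ComputableInOracle (chi A) (fun p => if p.unpair.1 ∈ A then 1 else 0) :=
    (computableInOracle_indicator_iff.2 .oracle).comp
      (.of_primrec (Primrec.fst.comp Primrec.unpair))
  refine ComputableInOracle.nat_rec
    (step := fun n x => x + (if n ∈ A then 1 else 0) * 2 ^ n)
    (hmem.comp₂ (g := fun p b => p.unpair.2 + b * 2 ^ p.unpair.1) ?_) fun n => rfl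
  exact Primrec.nat_add.comp (Primrec.snd.comp (Primrec.unpair.comp Primrec.fst))
    (Primrec.nat_mul.comp Primrec.snd (Primrec.nat_pow.comp (Primrec.const 2)
      (Primrec.fst.comp (Primrec.unpair.comp Primrec.fst))))

/-- A binary string `σ` of length `n` is coded as `⟨n, ∑ i < n, σ i * 2 ^ i⟩`. -/
def prefixSet : Set ℕ := Set.range fun n => Nat.pair n (prefixCode A n)

variable {A}

theorem mem_prefixSet_iff {m : ℕ} : m ∈ prefixSet A ↔ m.unpair.2 = prefixCode A m.unpair.1 := by
  refine ⟨?_, fun h => ⟨m.unpair.1, by simp [← h]⟩⟩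
  rintro ⟨n, rfl⟩
  simp

variable (A) in
theorem prefixSet_infinite : (prefixSet A).Infinite :=
  Set.infinite_range_of_injective fun a b hab => by
    simpa using congrArg (fun m => m.unpair.1) hab

variable (A) in
theorem turingRed_prefixSet : TuringRed (prefixSet A) A := by
  have hcode : ComputableInOracle (chi A) (fun m => prefixCode A m.unpair.1) :=
    (computableInOracle_prefixCode A).comp (.of_primrec (Primrec.fst.comp Primrec.unpair))
  refine computableInOracle_indicator_iff.1 ((hcode.comp₂
    (g := fun m c => if m.unpair.2 = c then 1 else 0) ?_).of_eq
    fun m => by simp [mem_prefixSet_iff])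
  exact Primrec.ite (Primrec.eq.comp (Primrec.snd.comp (Primrec.unpair.comp Primrec.fst))
    Primrec.snd) (Primrec.const 1) (Primrec.const 0)

theorem exists_lt_unpair_fst_of_subset_prefixSet {C : Set ℕ} (hC : C.Infinite)
    (hCA : C ⊆ prefixSet A) (a : ℕ) : ∃ m ∈ C, a < m.unpair.1 := by
  have hinj : Set.InjOn (fun m => m.unpair.1) C := fun m hm m' hm' h => by
    rw [← Nat.pair_unpair m, ← Nat.pair_unpair m', mem_prefixSet_iff.1 (hCA hm),
      mem_prefixSet_iff.1 (hCA hm'), show m.unpair.1 = m'.unpair.1 from h]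
  obtain ⟨_, ⟨m, hm, rfl⟩, ha⟩ := (hC.image hinj).exists_gt a
  exact ⟨m, hm, ha⟩

theorem turingRed_of_infinite_subset_prefixSet {B C : Set ℕ} (hC : C.Infinite)
    (hCB : TuringRed C B) (hCA : C ⊆ prefixSet A) : TuringRed A B := by
  have hsearch : ComputableInOracle (chi B)
      (fun k => if k.unpair.2 ∈ C ∧ k.unpair.1 < k.unpair.2.unpair.1 then 0 else 1) := by
    refine ((computableInOracle_indicator_iff.2 hCB).comp
      (.of_primrec (Primrec.snd.comp Primrec.unpair))).comp₂
      (g := fun k b => if b = 1 ∧ k.unpair.1 < k.unpair.2.unpair.1 then 0 else 1) ?_ |>.of_eq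
      fun k => by by_cases hk : k.unpair.2 ∈ C <;> simp [hk]
    exact Primrec.ite (PrimrecPred.and (Primrec.eq.comp Primrec.snd (Primrec.const 1))
      (Primrec.nat_lt.comp (Primrec.fst.comp (Primrec.unpair.comp Primrec.fst))
        (Primrec.fst.comp (Primrec.unpair.comp
          (Primrec.snd.comp (Primrec.unpair.comp Primrec.fst))))))
      (Primrec.const 0) (Primrec.const 1)
  have H : ∀ a, ∃ m, m ∈ C ∧ a < m.unpair.1 := exists_lt_unpair_fst_of_subset_prefixSet hC hCA
  have hfind := ComputableInOracle.find (p := fun a m => m ∈ C ∧ a < m.unpair.1) hsearch H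
  refine computableInOracle_indicator_iff.1
    ((hfind.comp₂ (g := fun a m => m.unpair.2 / 2 ^ a % 2) ?_).of_eq fun a => ?_)
  · exact Primrec.nat_mod.comp (Primrec.nat_div.comp
      (Primrec.snd.comp (Primrec.unpair.comp Primrec.snd))
      (Primrec.nat_pow.comp (Primrec.const 2) Primrec.fst)) (Primrec.const 2)
  · obtain ⟨hmC, ham⟩ := Nat.find_spec (H a)
    rw [mem_prefixSet_iff.1 (hCA hmC)]
    exact prefixCode_div_two_pow_mod_two A ham

end Prefix

/-- Immunity Lemma: if `A ≰_T B`, then there is a set `S ≤_T A` which is immune to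
`B`-computable sets: `S` is infinite and no infinite `B`-computable set is a subset of `S`. -/
theorem immunity_lemma (A B : Set ℕ) (h : ¬ TuringRed A B) :
    ∃ S : Set ℕ, TuringRed S A ∧ S.Infinite ∧
      ∀ C : Set ℕ, C.Infinite → TuringRed C B → ¬ C ⊆ S :=
  ⟨prefixSet A, turingRed_prefixSet A, prefixSet_infinite A,
    fun _ hC hCB hCA => h (turingRed_of_infinite_subset_prefixSet hC hCB hCA)⟩
end

section
/- Let A be an infinite set such that for all e, if A ⊆ W_e then the complement of W_e is finite or W_e \ A is finite. Then A is not c.e. if and only if the complement of A is Π⁰₁-immune. -/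
namespace Thesis

/-- The `e`-th c.e. set. -/
def W (e : ℕ) : Set ℕ := {n | ((Denumerable.ofNat Nat.Partrec.Code e).eval n).Dom}

/-- `M` is computably enumerable. -/
def CE (M : Set ℕ) : Prop := ∃ e : ℕ, M = W e

/-- `S` is `Π⁰₁`-immune: it is infinite and contains no infinite co-c.e. subset. -/
def Pi01Immune (S : Set ℕ) : Prop :=
  S.Infinite ∧ ∀ e : ℕ, (W e)ᶜ ⊆ S → ((W e)ᶜ).Finite

/-! If `A ⊆ W_e` with `W_e \ A` finite, then `A = W_e \ (W_e \ A)` is c.e., since c.e. sets are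
closed under removing finitely many elements; as `A ⊆ W_e ↔ (W_e)ᶜ ⊆ Aᶜ`, the hypothesis on `A`
then makes every co-c.e. subset of `Aᶜ` finite when `A` is not c.e. Conversely, if `A = W_e` then
`Aᶜ = (W_e)ᶜ` is itself a co-c.e. subset of `Aᶜ`. -/

open Nat.Partrec

lemma primrecPred_mem_finset {α : Type*} [Primcodable α] [DecidableEq α] (s : Finset α) :
    PrimrecPred (· ∈ s) :=
  (Primrec.nat_lt.comp (Primrec.list_idxOf₁ s.toList) (Primrec.const _)).of_eq fun _ =>
    List.idxOf_lt_length_iff.trans Finset.mem_toList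

lemma ce_dom_of_partrec {f : ℕ →. ℕ} (hf : Partrec f) : CE {n | (f n).Dom} := by
  obtain ⟨c, rfl⟩ := Code.exists_code.1 (Partrec.nat_iff.1 hf)
  exact ⟨Encodable.encode c, by simp [W, Denumerable.ofNat_encode]⟩

lemma partrec_eval_ofNat (e : ℕ) : Partrec (Denumerable.ofNat Code e).eval :=
  Code.eval_part.comp (Computable.const _) Computable.id

lemma CE.diff_finite {M F : Set ℕ} (hM : CE M) (hF : F.Finite) : CE (M \ F) := by
  classical
  obtain ⟨e, rfl⟩ := hM
  have hmem : Computable fun n => decide (n ∈ hF.toFinset) :=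
    (primrecPred_mem_finset hF.toFinset).decide.to_comp
  have hpart : Partrec fun n => cond (decide (n ∈ hF.toFinset)) Part.none
      ((Denumerable.ofNat Code e).eval n) :=
    Partrec.cond hmem Partrec.none (partrec_eval_ofNat e)
  convert ce_dom_of_partrec hpart using 1
  ext n
  by_cases hn : n ∈ F <;> simp [W, hn, Part.not_none_dom]

lemma ce_univ : CE Set.univ := by
  simpa using ce_dom_of_partrec (Partrec.const' (Part.some 0))

lemma ce_compl_of_finite {F : Set ℕ} (hF : F.Finite) : CE Fᶜ := by
  simpa [Set.compl_eq_univ_sdiff] using ce_univ.diff_finite hF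

lemma infinite_compl_of_not_ce {A : Set ℕ} (hA : ¬CE A) : Aᶜ.Infinite := fun hfin =>
  hA (by simpa using ce_compl_of_finite hfin)

lemma ce_of_subset_of_diff_finite {A M : Set ℕ} (hM : CE M) (hAM : A ⊆ M)
    (hfin : (M \ A).Finite) : CE A := by
  simpa [Set.sdiff_sdiff_cancel_left hAM] using hM.diff_finite hfin

lemma Pi01Immune.not_ce_compl {S : Set ℕ} (hS : Pi01Immune S) : ¬CE Sᶜ := by
  rintro ⟨e, he⟩
  rw [← compl_compl S, he] at hS
  exact hS.1 (hS.2 e subset_rfl)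

theorem not_ce_iff_compl_pi01immune_general (A : Set ℕ)
    (hmax : ∀ e : ℕ, A ⊆ W e → ((W e)ᶜ).Finite ∨ (W e \ A).Finite) :
    ¬ CE A ↔ Pi01Immune Aᶜ := by
  refine ⟨fun hA => ⟨infinite_compl_of_not_ce hA, fun e he => ?_⟩, fun hA => ?_⟩
  · have hAW : A ⊆ W e := Set.compl_subset_compl.mp he
    exact (hmax e hAW).resolve_right fun hfin =>
      hA (ce_of_subset_of_diff_finite ⟨e, rfl⟩ hAW hfin)
  · simpa using hA.not_ce_compl

/-- Let `A` be infinite such that whenever `A ⊆ W_e`, either `(W_e)ᶜ` is finite or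
`W_e \ A` is finite.  Then `A` is not c.e. iff `Aᶜ` is `Π⁰₁`-immune. -/
theorem not_ce_iff_compl_pi01immune (A : Set ℕ) (hinf : A.Infinite)
    (hmax : ∀ e : ℕ, A ⊆ W e → ((W e)ᶜ).Finite ∨ (W e \ A).Finite) :
    ¬ CE A ↔ Pi01Immune Aᶜ :=
  not_ce_iff_compl_pi01immune_general A hmax

end Thesis
end

section
/- There is a Δ⁰₂ dense immune set A whose complement is Π⁰₁-immune: namely, if f is a ∅'-computable function dominating every computable function with f(n+1) > f(n) > n for all n, then A = {p_{ω\W_e}(f(e)) : |ω \ W_e| ≥ f(e)} is Δ⁰₂, its principal function dominates every computable function, and ω \ A contains no infinite Π⁰₁ set. -/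
/-- `S` is `Π⁰₁`-immune: it is infinite and contains no infinite co-c.e. subset. -/
def Pi01Immune (S : Set ℕ) : Prop :=
  S.Infinite ∧ ∀ e : ℕ, (W e)ᶜ ⊆ S → ((W e)ᶜ).Finite

theorem RecursiveInOracle.of_natPartrec {O g : ℕ →. ℕ} (h : Nat.Partrec g) :
    RecursiveInOracle O g := by
  induction h with
  | zero => exact .zero
  | succ => exact .succ
  | left => exact .left
  | right => exact .right
  | pair _ _ ih₁ ih₂ => exact .pair ih₁ ih₂
  | comp _ _ ih₁ ih₂ => exact .comp ih₁ ih₂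
  | prec _ _ ih₁ ih₂ => exact .prec ih₁ ih₂
  | rfind _ ih => exact .rfind ih

namespace ComputableInOracle

variable {O : ℕ →. ℕ} {u v : ℕ → ℕ}

theorem of_eq_s10 (hu : ComputableInOracle O u) (h : ∀ n, u n = v n) : ComputableInOracle O v :=
  funext h ▸ hu

theorem of_computable {g : ℕ → ℕ} (hg : Computable g) : ComputableInOracle O g :=
  .of_natPartrec (Partrec.nat_iff.1 hg)

theorem computable_comp {g : ℕ → ℕ} (hg : Computable g) (hu : ComputableInOracle O u) :
    ComputableInOracle O fun n => g (u n) := by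
  simpa [ComputableInOracle] using RecursiveInOracle.comp (of_computable (O := O) hg) hu

theorem comp_computable (hu : ComputableInOracle O u) {g : ℕ → ℕ} (hg : Computable g) :
    ComputableInOracle O fun n => u (g n) := by
  simpa [ComputableInOracle] using RecursiveInOracle.comp hu (of_computable (O := O) hg)

theorem pair (hu : ComputableInOracle O u) (hv : ComputableInOracle O v) :
    ComputableInOracle O fun n => Nat.pair (u n) (v n) := by
  simpa [ComputableInOracle, Seq.seq] using RecursiveInOracle.pair hu hv

theorem comp₂_s10 {F : ℕ → ℕ → ℕ} (hF : Computable₂ F) (hu : ComputableInOracle O u)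
    (hv : ComputableInOracle O v) : ComputableInOracle O fun n => F (u n) (v n) := by
  have hF' : Computable fun p : ℕ => F p.unpair.1 p.unpair.2 :=
    hF.comp (Computable.fst.comp Computable.unpair) (Computable.snd.comp Computable.unpair)
  simpa using computable_comp hF' (hu.pair hv)

theorem sum_range {g : ℕ → ℕ → ℕ}
    (hg : ComputableInOracle O fun p => g p.unpair.1 p.unpair.2) :
    ComputableInOracle O fun p => ∑ k ∈ Finset.range p.unpair.2, g p.unpair.1 k := by
  have hacc : ComputableInOracle O fun q => q.unpair.2.unpair.2 := of_computable
    (Computable.snd.comp (Computable.unpair.comp (Computable.snd.comp Computable.unpair)))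
  have hnext : ComputableInOracle O fun q => g q.unpair.1 q.unpair.2.unpair.1 := by
    have hpr : Computable fun q : ℕ => Nat.pair q.unpair.1 q.unpair.2.unpair.1 :=
      (Primrec₂.natPair.comp (Primrec.fst.comp Primrec.unpair)
        (Primrec.fst.comp (Primrec.unpair.comp (Primrec.snd.comp Primrec.unpair)))).to_comp
    simpa using hg.comp_computable hpr
  have hstep := comp₂_s10 Primrec.nat_add.to_comp hacc hnext
  have hsum : ∀ a n : ℕ, Nat.rec (motive := fun _ => Part ℕ) (Part.some 0)
      (fun y IH => IH.bind fun i => Part.some (i + g a y)) n =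
        Part.some (∑ k ∈ Finset.range n, g a k) := by
    intro a n
    induction n with
    | zero => rfl
    | succ n ih => simp [ih, Finset.sum_range_succ]
  have hprec := RecursiveInOracle.prec (of_computable (O := O) (Computable.const 0)) hstep
  refine cast (congrArg (RecursiveInOracle O) (funext fun p => ?_)) hprec
  simpa [Nat.unpaired] using hsum p.unpair.1 p.unpair.2

end ComputableInOracle

open Classical in
def DecidableInOracle (O : ℕ →. ℕ) (P : ℕ → Prop) : Prop :=
  ComputableInOracle O fun n => if P n then 1 else 0

theorem turingRed_iff_decidableInOracle {A B : Set ℕ} :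
    TuringRed A B ↔ DecidableInOracle (chi B) (· ∈ A) :=
  Iff.rfl

namespace DecidableInOracle

variable {O : ℕ →. ℕ} {P Q : ℕ → Prop}

theorem mem_chi (S : Set ℕ) : DecidableInOracle (chi S) (· ∈ S) :=
  .oracle

theorem of_iff (hP : DecidableInOracle O P) (h : ∀ n, P n ↔ Q n) : DecidableInOracle O Q := by
  rwa [← funext fun n => propext (h n)]

theorem comp_computable (hP : DecidableInOracle O P) {g : ℕ → ℕ} (hg : Computable g) :
    DecidableInOracle O fun n => P (g n) :=
  ComputableInOracle.comp_computable hP hg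

theorem not (hP : DecidableInOracle O P) : DecidableInOracle O fun n => ¬P n :=
  (ComputableInOracle.computable_comp (Primrec.nat_sub.comp (Primrec.const 1) Primrec.id).to_comp
    hP).of_eq_s10 fun n => by by_cases h : P n <;> simp [h]

theorem and (hP : DecidableInOracle O P) (hQ : DecidableInOracle O Q) :
    DecidableInOracle O fun n => P n ∧ Q n :=
  (ComputableInOracle.comp₂_s10 Primrec.nat_mul.to_comp hP hQ).of_eq_s10 fun n => by
    by_cases hp : P n <;> by_cases hq : Q n <;> simp [hp, hq]

theorem eq {u v : ℕ → ℕ} (hu : ComputableInOracle O u) (hv : ComputableInOracle O v) :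
    DecidableInOracle O fun n => u n = v n :=
  (ComputableInOracle.comp₂_s10 (F := fun a b => if a = b then 1 else 0)
    (Primrec.ite Primrec.eq (Primrec.const 1) (Primrec.const 0)).to_comp hu hv).of_eq_s10 fun n => by
    simp

theorem of_iff_of_ne_zero (hQ : DecidableInOracle O Q) (h : ∀ n ≠ 0, P n ↔ Q n) :
    DecidableInOracle O P := by
  classical
  have hite := ComputableInOracle.comp₂_s10
    (F := fun n b => if n = 0 then (if P 0 then 1 else 0) else b)
    (Primrec.ite (Primrec.eq.comp Primrec.fst (Primrec.const 0)) (Primrec.const _)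
      Primrec.snd).to_comp
    (ComputableInOracle.of_computable Computable.id) hQ
  refine hite.of_eq_s10 fun n => ?_
  rcases eq_or_ne n 0 with rfl | hn
  · simp
  · simp [hn, h n hn]

open Classical in
theorem exists_lt {P : ℕ → ℕ → Prop}
    (hP : DecidableInOracle O fun p => P p.unpair.1 p.unpair.2) :
    DecidableInOracle O fun p => ∃ k < p.unpair.2, P p.unpair.1 k := by
  have hpos : Computable fun s : ℕ => if 0 < s then 1 else 0 :=
    (Primrec.ite (Primrec.nat_lt.comp (Primrec.const 0) Primrec.id) (Primrec.const 1)
      (Primrec.const 0)).to_comp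
  have hsum := ComputableInOracle.sum_range (g := fun a k => if P a k then 1 else 0) hP
  exact (ComputableInOracle.computable_comp hpos hsum).of_eq_s10 fun p => by simp [Finset.Nonempty]

end DecidableInOracle

open Classical in
theorem ComputableInOracle.count {O : ℕ →. ℕ} {P : ℕ → ℕ → Prop}
    (hP : DecidableInOracle O fun p => P p.unpair.1 p.unpair.2) :
    ComputableInOracle O fun p => Nat.count (P p.unpair.1) p.unpair.2 :=
  (ComputableInOracle.sum_range (g := fun a k => if P a k then 1 else 0) hP).of_eq_s10 fun p => by
    simp [Nat.count_eq_card_filter_range, Finset.sum_boole]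

open Classical in
theorem DecidableInOracle.exists_count_eq {O : ℕ →. ℕ} {V : ℕ → Set ℕ} {f : ℕ → ℕ}
    (hV : DecidableInOracle O fun p => p.unpair.2 ∈ V p.unpair.1) (hf : ComputableInOracle O f) :
    DecidableInOracle O fun m => ∃ e < m, m ∈ V e ∧ Nat.count (· ∈ V e) m = f e := by
  have hswap : Computable fun q : ℕ => Nat.pair q.unpair.2 q.unpair.1 :=
    (Primrec₂.natPair.comp (Primrec.snd.comp Primrec.unpair)
      (Primrec.fst.comp Primrec.unpair)).to_comp
  have hcount := ComputableInOracle.count (P := fun e n => n ∈ V e) hV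
  have htest : DecidableInOracle O fun q =>
      q.unpair.1 ∈ V q.unpair.2 ∧ Nat.count (· ∈ V q.unpair.2) q.unpair.1 = f q.unpair.2 :=
    ((hV.comp_computable hswap).and (.eq (hcount.comp_computable hswap)
      (hf.comp_computable (Computable.snd.comp Computable.unpair)))).of_iff (by simp)
  have hdiag : Computable fun m : ℕ => Nat.pair m m :=
    (Primrec₂.natPair.comp Primrec.id Primrec.id).to_comp
  have hexists := DecidableInOracle.exists_lt
    (P := fun m e => m ∈ V e ∧ Nat.count (· ∈ V e) m = f e) htest
  exact (hexists.comp_computable hdiag).of_iff (by simp)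

open Classical in
theorem eq_nth_iff_count_eq_of_ne_zero {S : Set ℕ} {k m : ℕ} (hm : m ≠ 0) :
    ((S.Infinite ∨ k ≤ S.ncard) ∧ m = Nat.nth (· ∈ S) k) ↔
      m ∈ S ∧ Nat.count (· ∈ S) m = k := by
  constructor
  · rintro ⟨-, rfl⟩
    exact ⟨Nat.nth_mem_of_ne_zero hm, Nat.count_nth (Nat.lt_card_toFinset_of_nth_ne_zero hm)⟩
  · rintro ⟨hmS, rfl⟩
    refine ⟨?_, (Nat.nth_count hmS).symm⟩
    rw [or_iff_not_imp_left, Set.not_infinite]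
    intro hfin
    rw [Set.ncard_eq_toFinset_card S hfin]
    exact Nat.count_le_card (p := (· ∈ S)) hfin m

/-- When `V e` has exactly `f e` elements, `Nat.nth` returns the junk value `0`, so `0` may
belong to this set spuriously; the characterisations below are for nonzero elements. -/
def nthSelection (V : ℕ → Set ℕ) (f : ℕ → ℕ) : Set ℕ :=
  {m | ∃ e : ℕ, ((V e).Infinite ∨ f e ≤ (V e).ncard) ∧ m = Nat.nth (· ∈ V e) (f e)}

section nthSelection

variable {V : ℕ → Set ℕ} {f : ℕ → ℕ}

open Classical in
theorem mem_nthSelection_iff_of_ne_zero {m : ℕ} (hm : m ≠ 0) :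
    m ∈ nthSelection V f ↔ ∃ e, m ∈ V e ∧ Nat.count (· ∈ V e) m = f e :=
  exists_congr fun _ => eq_nth_iff_count_eq_of_ne_zero hm

open Classical in
theorem mem_nthSelection_iff_exists_lt (hf : ∀ n, n < f n) {m : ℕ} (hm : m ≠ 0) :
    m ∈ nthSelection V f ↔ ∃ e < m, m ∈ V e ∧ Nat.count (· ∈ V e) m = f e := by
  rw [mem_nthSelection_iff_of_ne_zero hm]
  refine ⟨fun ⟨e, he⟩ => ⟨e, ?_, he⟩, fun ⟨e, _, he⟩ => ⟨e, he⟩⟩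
  calc e < f e := hf e
    _ = Nat.count (· ∈ V e) m := he.2.symm
    _ ≤ m := Nat.count_le _

theorem infinite_nthSelection (hf : f.Injective) (hV : {e | V e = Set.univ}.Infinite) :
    (nthSelection V f).Infinite := by
  refine (hV.image hf.injOn).mono ?_
  rintro _ ⟨e, he, rfl⟩
  refine ⟨e, Or.inl (he ▸ Set.infinite_univ), ?_⟩
  simp [show V e = Set.univ from he]

open Classical in
theorem count_nthSelection_le (hf : StrictMono f) (n : ℕ) :
    Nat.count (· ∈ nthSelection V f) (f n) ≤ n + 1 := by
  have hsub : {m ∈ Finset.range (f n) | m ∈ nthSelection V f} ⊆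
      insert 0 ((Finset.range n).image fun e => Nat.nth (· ∈ V e) (f e)) := by
    intro m hm
    rw [Finset.mem_filter, Finset.mem_range] at hm
    rcases eq_or_ne m 0 with rfl | hm0
    · exact Finset.mem_insert_self _ _
    obtain ⟨e, hme, hcount⟩ := (mem_nthSelection_iff_of_ne_zero hm0).1 hm.2
    have hen : e < n := hf.lt_iff_lt.1 (hcount ▸ (Nat.count_le _).trans_lt hm.1)
    exact Finset.mem_insert_of_mem
      (Finset.mem_image.2 ⟨e, Finset.mem_range.2 hen, hcount ▸ Nat.nth_count hme⟩)
  rw [Nat.count_eq_card_filter_range]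
  calc _ ≤ _ := Finset.card_le_card hsub
    _ ≤ ((Finset.range n).image fun e => Nat.nth (· ∈ V e) (f e)).card + 1 :=
      Finset.card_insert_le _ _
    _ ≤ n + 1 := by
      gcongr
      exact Finset.card_image_le.trans (Finset.card_range n).le

open Classical in
theorem le_nth_nthSelection (hf : StrictMono f) (hinf : (nthSelection V f).Infinite) (n : ℕ) :
    f n ≤ Nat.nth (· ∈ nthSelection V f) (n + 1) :=
  (Nat.count_le_iff_le_nth hinf).1 (count_nthSelection_le hf n)

end nthSelection

theorem infinite_setOf_W_eq_empty : {e | W e = ∅}.Infinite := by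
  obtain ⟨c, hc⟩ := Nat.Partrec.Code.exists_code.1 Nat.Partrec.none
  let code : ℕ → ℕ := fun k => Encodable.encode (c.comp (Nat.Partrec.Code.const k))
  have hinj : code.Injective := fun a b hab => by
    have := Encodable.encode_injective hab
    injection this with _ h
    exact Nat.Partrec.Code.const_inj h
  refine Set.infinite_of_injective_forall_mem hinj fun k => ?_
  ext n
  simp [code, W, Nat.Partrec.Code.eval, Nat.Partrec.Code.eval_const, hc]

def DominatesComputable (h : ℕ → ℕ) : Prop :=
  ∀ g : ℕ → ℕ, Computable g → ∀ᶠ n in Filter.atTop, g n < h n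

theorem DominatesComputable.of_le_succ {f h : ℕ → ℕ} (hf : DominatesComputable f)
    (hle : ∀ n, f n ≤ h (n + 1)) : DominatesComputable h := fun g hg => by
  rw [← Filter.map_add_atTop_eq_nat 1, Filter.eventually_map]
  exact (hf _ (hg.comp Computable.succ)).mono fun n hn => hn.trans_le (hle n)

theorem infinite_compl_of_dominatesComputable_nth {S : Set ℕ}
    (hS : DominatesComputable (Nat.nth (· ∈ S))) : Sᶜ.Infinite := by
  intro hfin
  obtain ⟨K, hK⟩ := hfin.bddAbove
  have hmaps : ∀ n, n + (K + 1) ∈ S := fun n => by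
    by_contra h
    have := hK h
    omega
  have hle : ∀ n, Nat.nth (· ∈ S) n ≤ n + (K + 1) := fun n =>
    Nat.nth_le_of_strictMonoOn_of_mapsTo _ (fun n _ => hmaps n)
      (fun _ _ _ _ h => Nat.add_lt_add_right h _)
  have hg : Computable fun n : ℕ => n + (K + 1) :=
    (Primrec.nat_add.comp Primrec.id (Primrec.const _)).to_comp
  obtain ⟨n, hn⟩ := (hS _ hg).exists
  exact (hn.trans_le (hle n)).false

/-- If `f` is `∅'`-computable, dominates every computable function, and satisfies
`f(n+1) > f(n) > n`, then `A = {p_{ω∖W_e}(f(e)) : |ω∖W_e| ≥ f(e)}` is a `Δ⁰₂` dense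
immune set whose complement is `Π⁰₁`-immune. -/
theorem delta02_dense_immune_with_pi01immune_complement
    (f : ℕ → ℕ) (hfK0 : ComputableInOracle (chi K0) f)
    (hfdom : ∀ g : ℕ → ℕ, Computable g → ∀ᶠ n in Filter.atTop, g n < f n)
    (hfmono : ∀ n : ℕ, n < f n ∧ f n < f (n + 1))
    (A : Set ℕ)
    (hA : A = {m | ∃ e : ℕ, (((W e)ᶜ).Infinite ∨ f e ≤ ((W e)ᶜ).ncard) ∧
        m = Nat.nth (· ∈ (W e)ᶜ) (f e)}) :
    TuringRed A K0 ∧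
      (∀ g : ℕ → ℕ, Computable g → ∀ᶠ n in Filter.atTop, g n < Nat.nth (· ∈ A) n) ∧
      Pi01Immune Aᶜ := by
  change A = nthSelection (fun e => (W e)ᶜ) f at hA
  subst hA
  have hf : StrictMono f := strictMono_nat_of_lt_succ fun n => (hfmono n).2
  have hinf : (nthSelection (fun e => (W e)ᶜ) f).Infinite :=
    infinite_nthSelection hf.injective (by simpa using infinite_setOf_W_eq_empty)
  have hdense := DominatesComputable.of_le_succ hfdom (le_nth_nthSelection hf hinf)
  refine ⟨?_, hdense, infinite_compl_of_dominatesComputable_nth hdense, fun e hsub => ?_⟩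
  · have hV : DecidableInOracle (chi K0) fun p => p.unpair.2 ∈ (W p.unpair.1)ᶜ :=
      (DecidableInOracle.mem_chi K0).not
    exact turingRed_iff_decidableInOracle.2 <| (hV.exists_count_eq hfK0).of_iff_of_ne_zero
      fun m hm => mem_nthSelection_iff_exists_lt (fun n => (hfmono n).1) hm
  · by_contra hWinf
    exact hsub (Nat.nth_mem_of_infinite hWinf (f e)) ⟨e, Or.inl hWinf, rfl⟩
end

section
/- If B ⊆ A are c.e. sets with A non-computable, then A \ B is Π⁰₁-immune if and only if B is a major subset of A. -/
/-!
If `B` is major in `A` and `(W e)ᶜ ⊆ A \ B`, then `Aᶜ ⊆ W e`, so `Bᶜ ⊆* W e`; as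
`(W e)ᶜ ⊆ Bᶜ \ W e`, it is finite. Conversely, let `A \ B` be `Π⁰₁`-immune and `Aᶜ ⊆* W e`.
The set `W e ∪ B ∪ (Aᶜ \ W e)` is c.e. (a finite modification of a union of c.e. sets) and its
complement lies in `A \ B`, so that complement is finite; `Bᶜ \ W e` is covered by it together
with the finite set `Aᶜ \ W e`.
-/

namespace Thesis

/-- `X ⊆* Y`: `X` is included in `Y` up to a finite set. -/
def AlmostSubset (X Y : Set ℕ) : Prop := (X \ Y).Finite

/-- For c.e. sets `B ⊆ A`, `B` is a major subset of `A`. -/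
def MajorSubset (B A : Set ℕ) : Prop :=
  (A \ B).Infinite ∧ ∀ e : ℕ, AlmostSubset Aᶜ (W e) → AlmostSubset Bᶜ (W e)

theorem CE.of_partrec {f : ℕ →. ℕ} (hf : Nat.Partrec f) : CE {n | (f n).Dom} := by
  obtain ⟨c, rfl⟩ := Nat.Partrec.Code.exists_code.1 hf
  exact ⟨Encodable.encode c, by simp [W]⟩

theorem CE.exists_partrec {M : Set ℕ} (hM : CE M) :
    ∃ f : ℕ →. ℕ, Nat.Partrec f ∧ M = {n | (f n).Dom} := by
  obtain ⟨e, rfl⟩ := hM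
  exact ⟨_, Nat.Partrec.Code.exists_code.2 ⟨_, rfl⟩, rfl⟩

theorem CE.union {M N : Set ℕ} (hM : CE M) (hN : CE N) : CE (M ∪ N) := by
  obtain ⟨f, hf, rfl⟩ := hM.exists_partrec
  obtain ⟨g, hg, rfl⟩ := hN.exists_partrec
  obtain ⟨h, hh, hdom⟩ := Nat.Partrec.merge' hf hg
  convert CE.of_partrec hh using 1
  ext n
  simp [(hdom n).2]

theorem CE.insert {M : Set ℕ} (a : ℕ) (hM : CE M) : CE (insert a M) := by
  obtain ⟨g, hg, rfl⟩ := hM.exists_partrec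
  have hdec : Computable fun n : ℕ => decide (n = a) :=
    (PrimrecPred.decide (Primrec.eq.comp .id (.const a))).to_comp
  have hcond : Partrec fun n : ℕ => cond (decide (n = a)) (Part.some 0) (g n) :=
    Partrec.cond hdec (Computable.const 0).partrec (Partrec.nat_iff.2 hg)
  convert CE.of_partrec (Partrec.nat_iff.1 hcond) using 1
  ext n
  by_cases h : n = a <;> simp [h]

theorem CE.union_finite {M F : Set ℕ} (hM : CE M) (hF : F.Finite) : CE (M ∪ F) := by
  induction F, hF using Set.Finite.induction_on with
  | empty => simpa using hM
  | insert _ _ ih =>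
    rw [Set.union_insert]
    exact ih.insert _

theorem majorSubset_of_pi01Immune_diff {A B : Set ℕ} (hB : CE B) (h : Pi01Immune (A \ B)) :
    MajorSubset B A := by
  refine ⟨h.1, fun e he => ?_⟩
  obtain ⟨d, hd⟩ := (CE.union ⟨e, rfl⟩ hB).union_finite he
  have hcompl : (W d)ᶜ = (A \ B) \ W e := by
    rw [← hd]
    ext n
    simp only [Set.mem_compl_iff, Set.mem_union, Set.mem_sdiff]
    tauto
  have hfin : ((W d)ᶜ).Finite := h.2 d (hcompl ▸ Set.sdiff_subset)
  refine (hfin.union he).subset fun n hn => ?_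
  by_cases hA : n ∈ A
  · exact Or.inl (hcompl ▸ ⟨⟨hA, hn.1⟩, hn.2⟩)
  · exact Or.inr ⟨hA, hn.2⟩

theorem pi01Immune_diff_of_majorSubset {A B : Set ℕ} (h : MajorSubset B A) :
    Pi01Immune (A \ B) := by
  refine ⟨h.1, fun e hsub => ?_⟩
  have hAc : Aᶜ ⊆ W e := fun n hn => not_not.1 fun hne => hn (hsub hne).1
  have hA : AlmostSubset Aᶜ (W e) := by simp [AlmostSubset, Set.sdiff_eq_empty.2 hAc]
  exact (h.2 e hA).subset fun n hn => ⟨(hsub hn).2, hn⟩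

theorem diff_pi01immune_iff_major_general (A B : Set ℕ) (hB : CE B) :
    Pi01Immune (A \ B) ↔ MajorSubset B A :=
  ⟨majorSubset_of_pi01Immune_diff hB, pi01Immune_diff_of_majorSubset⟩

/-- If `B ⊆ A` are c.e. sets with `A` non-computable, then `A \ B` is `Π⁰₁`-immune iff
`B` is a major subset of `A`. -/
theorem diff_pi01immune_iff_major (A B : Set ℕ) (hA : CE A) (hB : CE B) (hBA : B ⊆ A)
    (hnc : ¬ ComputablePred (· ∈ A)) :
    Pi01Immune (A \ B) ↔ MajorSubset B A :=
  diff_pi01immune_iff_major_general A B hB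

end Thesis
end
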